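/- Let E be a complex Hilbert space, M ∈ ℕ, let G : Fin (M+1) → Type be a finite family of complex Hilbert spaces, and let V : Π n, (G n →ₗᵢ[ℂ] E) be a family of linear isometries. Let N : E →ₗ.[ℂ] E be a symmetric densely defined unbounded operator (LinearPMap with N.IsSymmetric) such that for every n : Fin (M+1) the range of V n equals the eigenspace {x : E | ∃ hx : x ∈ N.domain, N ⟨x, hx⟩ = ((n : ℕ) : ℂ) • x} of N, and assume that the closed linear span of ⋃ₙ Set.range (V n) is all of E. Then the map x ↦ (fun n => ((V n).toContinuousLinearMap).adjoint x) defines a linear isometric equivalence E ≃ₗᵢ[ℂ] PiLp 2 G; in particular E is the finite Hilbert space direct sum ⊕_{n=0}^{M} G n. -/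

import Mathlib

open scoped ComplexInnerProductSpace

/-- A densely defined (in general unbounded) operator `N` is symmetric if
`⟪N x, y⟫ = ⟪x, N y⟫` for all `x, y` in its domain. -/
def LinearPMap.IsSymmetric {H : Type*} [NormedAddCommGroup H] [InnerProductSpace ℂ H]
    (N : H →ₗ.[ℂ] H) : Prop :=
  ∀ x y : N.domain, ⟪N x, (y : H)⟫ = ⟪(x : H), N y⟫

/-!
Eigenvectors of a symmetric operator for distinct real eigenvalues are orthogonal,
so the `V n` form an orthogonal family; by the density of their span, `E` is the Hilbert sum
of the `G n`. In any Hilbert sum `E ≅ ℓ²(G)`, the `i`-th coordinate of `x` is `(V i)† x`,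
because `⟪x, V i v⟫ = ⟪x_i, v⟫`. For finitely many summands `ℓ²(G) = PiLp 2 G`.
-/

namespace LinearPMap.IsSymmetric

variable {H : Type*} [NormedAddCommGroup H] [InnerProductSpace ℂ H] {N : H →ₗ.[ℂ] H}

theorem inner_eq_zero_of_eigenvalue_ne (hN : N.IsSymmetric) {μ ν : ℝ} (hμν : μ ≠ ν)
    (x y : N.domain) (hx : N x = (μ : ℂ) • (x : H)) (hy : N y = (ν : ℂ) • (y : H)) :
    ⟪(x : H), y⟫ = 0 := by
  have h := hN x y
  rw [hx, hy, inner_smul_left, inner_smul_right, Complex.conj_ofReal] at h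
  have hne : (μ : ℂ) - ν ≠ 0 := sub_ne_zero.mpr (Complex.ofReal_injective.ne hμν)
  exact (mul_eq_zero.mp (by rw [sub_mul, h, sub_self])).resolve_left hne

theorem orthogonalFamily {ι : Type*} {G : ι → Type*} [∀ i, NormedAddCommGroup (G i)]
    [∀ i, InnerProductSpace ℂ (G i)] {V : ∀ i, G i →ₗᵢ[ℂ] H} (hN : N.IsSymmetric)
    {μ : ι → ℝ} (hμ : Function.Injective μ)
    (hV : ∀ i (v : G i), ∃ hv : V i v ∈ N.domain, N ⟨V i v, hv⟩ = (μ i : ℂ) • V i v) :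
    OrthogonalFamily ℂ G V := by
  intro i j hij v w
  obtain ⟨hv, hNv⟩ := hV i v
  obtain ⟨hw, hNw⟩ := hV j w
  exact hN.inner_eq_zero_of_eigenvalue_ne (hμ.ne hij) ⟨_, hv⟩ ⟨_, hw⟩ hNv hNw

end LinearPMap.IsSymmetric

theorem IsHilbertSum.linearIsometryEquiv_apply_eq_adjoint {𝕜 ι E : Type*} [RCLike 𝕜]
    [NormedAddCommGroup E] [InnerProductSpace 𝕜 E] [CompleteSpace E] {G : ι → Type*}
    [∀ i, NormedAddCommGroup (G i)] [∀ i, InnerProductSpace 𝕜 (G i)] [∀ i, CompleteSpace (G i)]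
    {V : ∀ i, G i →ₗᵢ[𝕜] E} (hV : IsHilbertSum 𝕜 G V) (x : E) (i : ι) :
    hV.linearIsometryEquiv x i = ContinuousLinearMap.adjoint (V i).toContinuousLinearMap x := by
  classical
  refine ext_inner_right 𝕜 fun v => ?_
  calc inner 𝕜 (hV.linearIsometryEquiv x i) v
      = inner 𝕜 (hV.linearIsometryEquiv x) (lp.single 2 i v) := (lp.inner_single_right i v _).symm
    _ = inner 𝕜 x (V i v) := by
      rw [← hV.linearIsometryEquiv.inner_map_map x (V i v),
        ← hV.linearIsometryEquiv_symm_apply_single, LinearIsometryEquiv.apply_symm_apply]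
    _ = _ := ((V i).toContinuousLinearMap.adjoint_inner_left v x).symm

theorem stmt_14_general {E : Type*} [NormedAddCommGroup E] [InnerProductSpace ℂ E] [CompleteSpace E]
    (M : ℕ) (G : Fin (M + 1) → Type*) [∀ n, NormedAddCommGroup (G n)]
    [∀ n, InnerProductSpace ℂ (G n)] [∀ n, CompleteSpace (G n)]
    (V : ∀ n, G n →ₗᵢ[ℂ] E)
    (N : E →ₗ.[ℂ] E) (hN : N.IsSymmetric)
    (heig : ∀ n : Fin (M + 1), Set.range (V n) =
      {x : E | ∃ hx : x ∈ N.domain, N ⟨x, hx⟩ = ((n : ℕ) : ℂ) • x})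
    (hspan : (Submodule.span ℂ (⋃ n, Set.range (V n))).topologicalClosure = ⊤) :
    ∃ Φ : E ≃ₗᵢ[ℂ] PiLp 2 G, ∀ (x : E) (n : Fin (M + 1)),
      (Φ x : ∀ n, G n) n = ContinuousLinearMap.adjoint (V n).toContinuousLinearMap x := by
  have hortho : OrthogonalFamily ℂ G V :=
    hN.orthogonalFamily (μ := fun n => ((n : ℕ) : ℝ))
      (fun m n h => Fin.ext (Nat.cast_injective h)) fun n v => by
        simpa [Complex.ofReal_natCast] using (heig n).subset ⟨v, rfl⟩
  have hsum : IsHilbertSum ℂ G V := by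
    refine IsHilbertSum.mk hortho ?_
    rw [← hspan, Submodule.span_iUnion]
    gcongr with n
    exact Submodule.span_le.mpr (Set.range_subset_iff.mpr fun v => ⟨v, rfl⟩)
  exact ⟨hsum.linearIsometryEquiv.trans (lpPiLpₗᵢ G ℂ), fun x n =>
    hsum.linearIsometryEquiv_apply_eq_adjoint x n⟩

theorem stmt_14 {E : Type*} [NormedAddCommGroup E] [InnerProductSpace ℂ E] [CompleteSpace E]
    (M : ℕ) (G : Fin (M + 1) → Type*) [∀ n, NormedAddCommGroup (G n)]
    [∀ n, InnerProductSpace ℂ (G n)] [∀ n, CompleteSpace (G n)]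
    (V : ∀ n, G n →ₗᵢ[ℂ] E)
    (N : E →ₗ.[ℂ] E) (hdense : Dense (N.domain : Set E)) (hN : N.IsSymmetric)
    (heig : ∀ n : Fin (M + 1), Set.range (V n) =
      {x : E | ∃ hx : x ∈ N.domain, N ⟨x, hx⟩ = ((n : ℕ) : ℂ) • x})
    (hspan : (Submodule.span ℂ (⋃ n, Set.range (V n))).topologicalClosure = ⊤) :
    ∃ Φ : E ≃ₗᵢ[ℂ] PiLp 2 G, ∀ (x : E) (n : Fin (M + 1)),
      (Φ x : ∀ n, G n) n = ContinuousLinearMap.adjoint (V n).toContinuousLinearMap x :=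
  stmt_14_general M G V N hN heig hspan
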